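/- Let (c, ρ, θ, u) be a classical solution of the mesoscopic two-phase Navier–Stokes system on [0,T], spatially 1-periodic, with u twice continuously differentiable in x and σ := μ(c)∂ₓu − (γ(c)−1)ρθ continuously differentiable. Then σ satisfies pointwise the equation D_tσ = μ(c)·∂ₓ(∂ₓσ/ρ) − ((γ(c)−1)/c_v(c) + 1)·σ·∂ₓu, where D_t f = ∂ₜf + u∂ₓf. -/

import Mathlib

/-!
Along particle paths `c` is constant and `ρ` decays at rate `ρ ∂ₓu`; subtracting `u` times the
momentum equation from the total energy equation leaves the internal energy equation
`ρ c_v(c) D_tθ = σ ∂ₓu`. Inserting these into `D_tσ = μ(c) D_t∂ₓu − (γ(c)−1) D_t(ρθ)`, and using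
`∂ₓσ/ρ = D_tu`, whose `x`-derivative is `D_t∂ₓu + (∂ₓu)²`, gives the identity.
The one analytic point is the exchange `∂ₓ∂ₜu = ∂ₜ∂ₓu`: since `σ` is `C¹` and `μ(c) > 0`,
`∂ₓu = (σ + (γ(c)−1)ρθ)/μ(c)` is `C¹`, and then `∂ₜu(t,y) − ∂ₜu(t,x) = ∫ₓʸ ∂ₜ∂ₓu(t,z) dz` by
differentiating `u(s,y) − u(s,x) = ∫ₓʸ ∂ₓu(s,z) dz` under the integral sign.
-/

open Set Function MeasureTheory intervalIntegral

/-- Partial derivative in time of a function of `(t, x)`. -/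
noncomputable def pdt (f : ℝ → ℝ → ℝ) (t x : ℝ) : ℝ := deriv (fun s => f s x) t

/-- Partial derivative in space of a function of `(t, x)`. -/
noncomputable def pdx (f : ℝ → ℝ → ℝ) (t x : ℝ) : ℝ := deriv (fun y => f t y) x

/-- Affine interpolation of a coefficient between the two phases:
`aff a b c = c·a + (1−c)·b` (so `μ(c) = aff μ₊ μ₋ c`, etc.). -/
def affc (a b s : ℝ) : ℝ := s * a + (1 - s) * b

/-- Cauchy stress `σ = μ(c)∂ₓu − (γ(c)−1)ρθ` of the mesoscopic two-phase model. -/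
noncomputable def sigm (μp μm γp γm : ℝ) (c ρ θ u : ℝ → ℝ → ℝ) (t x : ℝ) : ℝ :=
  affc μp μm (c t x) * pdx u t x - (affc γp γm (c t x) - 1) * ρ t x * θ t x

/-- Specific total energy `E = u²/2 + c_v(c)θ`. -/
noncomputable def Etot (kp km : ℝ) (c θ u : ℝ → ℝ → ℝ) (t x : ℝ) : ℝ :=
  u t x ^ 2 / 2 + affc kp km (c t x) * θ t x

/-- Admissible constants: `μ_± > 0`, `γ_± > 1`, `c_{v,±} > 0`. -/
def GoodConsts (μp μm γp γm kp km : ℝ) : Prop :=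
  0 < μp ∧ 0 < μm ∧ 1 < γp ∧ 1 < γm ∧ 0 < kp ∧ 0 < km

/-- The mesoscopic two-phase Navier–Stokes system on the one-dimensional torus:
spatial 1-periodicity together with the transport, mass, momentum and total
energy equations, satisfied pointwise on `[0,T] × ℝ`. -/
def MesoEqns (μp μm γp γm kp km T : ℝ) (c ρ θ u : ℝ → ℝ → ℝ) : Prop :=
  (∀ t x : ℝ, c t (x + 1) = c t x) ∧ (∀ t x : ℝ, ρ t (x + 1) = ρ t x) ∧
  (∀ t x : ℝ, θ t (x + 1) = θ t x) ∧ (∀ t x : ℝ, u t (x + 1) = u t x) ∧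
  (∀ t ∈ Icc (0:ℝ) T, ∀ x : ℝ, pdt c t x + u t x * pdx c t x = 0) ∧
  (∀ t ∈ Icc (0:ℝ) T, ∀ x : ℝ,
    pdt ρ t x + pdx (fun s y => ρ s y * u s y) t x = 0) ∧
  (∀ t ∈ Icc (0:ℝ) T, ∀ x : ℝ,
    pdt (fun s y => ρ s y * u s y) t x + pdx (fun s y => ρ s y * u s y ^ 2) t x
      = pdx (sigm μp μm γp γm c ρ θ u) t x) ∧
  (∀ t ∈ Icc (0:ℝ) T, ∀ x : ℝ,
    pdt (fun s y => ρ s y * Etot kp km c θ u s y) t x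
      + pdx (fun s y => ρ s y * Etot kp km c θ u s y * u s y) t x
      = pdx (fun s y => sigm μp μm γp γm c ρ θ u s y * u s y) t x)

open Metric Topology

section PartialDerivatives

variable {f : ℝ → ℝ → ℝ} {t x : ℝ}

theorem hasDerivAt_pdt (hf : DifferentiableAt ℝ (uncurry f) (t, x)) :
    HasDerivAt (fun s => f s x) (pdt f t x) t := by
  have h := hf.comp t <| show DifferentiableAt ℝ (fun s : ℝ => (s, x)) t from
    differentiableAt_id.prodMk (differentiableAt_const x)
  exact h.hasDerivAt

theorem hasDerivAt_pdx (hf : DifferentiableAt ℝ (uncurry f) (t, x)) :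
    HasDerivAt (fun y => f t y) (pdx f t x) x := by
  have h := hf.comp x <| show DifferentiableAt ℝ (fun y : ℝ => (t, y)) x from
    (differentiableAt_const t).prodMk differentiableAt_id
  exact h.hasDerivAt

theorem continuousOn_pdt {O : Set (ℝ × ℝ)} (hO : IsOpen O) (hf : ContDiffOn ℝ 1 (uncurry f) O) :
    ContinuousOn (uncurry (pdt f)) O := by
  refine ((hf.continuousOn_fderiv_of_isOpen hO le_rfl).clm_apply
    (continuousOn_const (c := ((1 : ℝ), (0 : ℝ))))).congr fun q hq => ?_
  have hd := (hf.differentiableOn one_ne_zero q hq).differentiableAt (hO.mem_nhds hq)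
  exact (hd.hasFDerivAt.comp_hasDerivAt q.1
    ((hasDerivAt_id q.1).prodMk (hasDerivAt_const q.1 q.2))).deriv

theorem pdt_sub_pdt_eq_integral (hf : Differentiable ℝ (uncurry f)) {O : Set (ℝ × ℝ)}
    (hO : IsOpen O) (hg : ContDiffOn ℝ 1 (uncurry (pdx f)) O) {y r : ℝ} (hr : 0 < r)
    (hK : closedBall t r ×ˢ uIcc x y ⊆ O) :
    pdt f t y - pdt f t x = ∫ z in x..y, pdt (pdx f) t z := by
  have hW := continuousOn_pdt hO hg
  obtain ⟨C, hC⟩ :=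
    ((isCompact_closedBall t r).prod isCompact_uIcc).exists_bound_of_continuousOn (hW.mono hK)
  have hslice : ∀ s ∈ closedBall t r, MapsTo (fun z => (s, z)) (uIcc x y) O :=
    fun s hs z hz => hK ⟨hs, hz⟩
  have hcont : ∀ s ∈ closedBall t r, ContinuousOn (fun z => pdx f s z) (uIcc x y) :=
    fun s hs => hg.continuousOn.comp (by fun_prop) (hslice s hs)
  have htr : t ∈ closedBall t r := mem_closedBall_self hr.le
  have hint : HasDerivAt (fun s => ∫ z in x..y, pdx f s z) (∫ z in x..y, pdt (pdx f) t z) t := by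
    refine (hasDerivAt_integral_of_dominated_loc_of_deriv_le (bound := fun _ => C)
      (ball_mem_nhds t hr) ?_ ((hcont t htr).intervalIntegrable) ?_ ?_
      intervalIntegrable_const ?_).2
    · filter_upwards [ball_mem_nhds t hr] with s hs
      exact ((hcont s (ball_subset_closedBall hs)).mono uIoc_subset_uIcc).aestronglyMeasurable
        measurableSet_uIoc
    · exact ((hW.comp (by fun_prop) (hslice t htr)).mono uIoc_subset_uIcc).aestronglyMeasurable
        measurableSet_uIoc
    · exact Filter.Eventually.of_forall fun z hz s hs =>
        hC (s, z) ⟨ball_subset_closedBall hs, uIoc_subset_uIcc hz⟩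
    · refine Filter.Eventually.of_forall fun z hz s hs => hasDerivAt_pdt ?_
      have hsz := hslice s (ball_subset_closedBall hs) (uIoc_subset_uIcc hz)
      exact (hg.differentiableOn one_ne_zero _ hsz).differentiableAt (hO.mem_nhds hsz)
  have hftc : (fun s => ∫ z in x..y, pdx f s z) =ᶠ[𝓝 t] fun s => f s y - f s x := by
    filter_upwards [ball_mem_nhds t hr] with s hs
    exact integral_eq_sub_of_hasDerivAt (fun z _ => hasDerivAt_pdx (hf (s, z)))
      (hcont s (ball_subset_closedBall hs)).intervalIntegrable
  exact ((hasDerivAt_pdt (hf (t, y))).sub (hasDerivAt_pdt (hf (t, x)))).unique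
    (hint.congr_of_eventuallyEq hftc.symm)

theorem hasDerivAt_pdt_of_contDiffAt_pdx (hf : Differentiable ℝ (uncurry f))
    (hg : ContDiffAt ℝ 1 (uncurry (pdx f)) (t, x)) :
    HasDerivAt (fun y => pdt f t y) (pdt (pdx f) t x) x := by
  obtain ⟨ε, hε, hball⟩ := eventually_nhds_iff_ball.mp (hg.eventually (by simp))
  have hO : ContDiffOn ℝ 1 (uncurry (pdx f)) (ball (t, x) ε) :=
    fun q hq => (hball q hq).contDiffWithinAt
  have hslice : MapsTo (fun z => (t, z)) (ball x ε) (ball (t, x) ε) := fun z hz => by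
    simpa [Prod.dist_eq, hε] using hz
  have hW : ContinuousOn (fun z => pdt (pdx f) t z) (ball x ε) :=
    (continuousOn_pdt isOpen_ball hO).comp (by fun_prop) hslice
  have hx : x ∈ ball x ε := mem_ball_self hε
  have hFTC : HasDerivAt (fun y => ∫ z in x..y, pdt (pdx f) t z) (pdt (pdx f) t x) x :=
    integral_hasDerivAt_right IntervalIntegrable.refl
      (hW.stronglyMeasurableAtFilter isOpen_ball x hx) (hW.continuousAt (ball_mem_nhds x hε))
  refine (hFTC.const_add (pdt f t x)).congr_of_eventuallyEq ?_
  filter_upwards [ball_mem_nhds x (half_pos hε)] with y hy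
  have hK : closedBall t (ε / 2) ×ˢ uIcc x y ⊆ ball (t, x) ε := by
    rintro ⟨s, z⟩ ⟨hs, hz⟩
    have hzx : dist z x ≤ dist y x := by
      simpa only [Real.dist_eq] using abs_sub_left_of_mem_uIcc hz
    rw [mem_ball, Prod.dist_eq, max_lt_iff]
    exact ⟨(mem_closedBall.mp hs).trans_lt (half_lt_self hε),
      hzx.trans_lt ((mem_ball.mp hy).trans (half_lt_self hε))⟩
  rw [← pdt_sub_pdt_eq_integral hf isOpen_ball hO (half_pos hε) hK]
  ring

end PartialDerivatives

theorem affc_pos {a b s : ℝ} (ha : 0 < a) (hb : 0 < b) (hs : s ∈ Icc (0 : ℝ) 1) :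
    0 < affc a b s := by
  obtain ⟨hs0, hs1⟩ := hs
  rcases hs0.eq_or_lt with rfl | hs0
  · simpa [affc] using hb
  · unfold affc
    nlinarith [mul_pos hs0 ha, mul_nonneg (sub_nonneg.2 hs1) hb.le]

theorem HasDerivAt.affc {a b f' r : ℝ} {f : ℝ → ℝ} (hf : HasDerivAt f f' r) :
    HasDerivAt (fun r => affc a b (f r)) ((a - b) * f') r :=
  ((hf.mul_const a).add ((hf.const_sub 1).mul_const b)).congr_deriv (by ring)

theorem ContDiff.affc {E : Type*} [NormedAddCommGroup E] [NormedSpace ℝ E] {n : WithTop ℕ∞}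
    {a b : ℝ} {f : E → ℝ} (hf : ContDiff ℝ n f) : ContDiff ℝ n (fun q => affc a b (f q)) := by
  unfold _root_.affc
  fun_prop

/-- The material derivative `D_t f` of the paper. -/
noncomputable def materialDeriv (u f : ℝ → ℝ → ℝ) (t x : ℝ) : ℝ := pdt f t x + u t x * pdx f t x

section Balance

variable {c ρ θ u : ℝ → ℝ → ℝ} {t x : ℝ}

theorem materialDeriv_eq_neg_of_mass (hρ : DifferentiableAt ℝ (uncurry ρ) (t, x))
    (hu : DifferentiableAt ℝ (uncurry u) (t, x))
    (hmass : pdt ρ t x + pdx (fun s y => ρ s y * u s y) t x = 0) :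
    materialDeriv u ρ t x = -(ρ t x * pdx u t x) := by
  have hflux : pdx (fun s y => ρ s y * u s y) t x = pdx ρ t x * u t x + ρ t x * pdx u t x :=
    ((hasDerivAt_pdx hρ).mul (hasDerivAt_pdx hu)).deriv
  unfold materialDeriv
  linear_combination hmass - hflux

theorem pdx_eq_mul_materialDeriv_of_momentum {S : ℝ} (hρ : DifferentiableAt ℝ (uncurry ρ) (t, x))
    (hu : DifferentiableAt ℝ (uncurry u) (t, x))
    (hmass : pdt ρ t x + pdx (fun s y => ρ s y * u s y) t x = 0)
    (hmom : pdt (fun s y => ρ s y * u s y) t x + pdx (fun s y => ρ s y * u s y ^ 2) t x = S) :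
    S = ρ t x * materialDeriv u u t x := by
  have hρ' := materialDeriv_eq_neg_of_mass hρ hu hmass
  have hmomentum : pdt (fun s y => ρ s y * u s y) t x = pdt ρ t x * u t x + ρ t x * pdt u t x :=
    ((hasDerivAt_pdt hρ).mul (hasDerivAt_pdt hu)).deriv
  have hflux : pdx (fun s y => ρ s y * u s y ^ 2) t x
      = pdx ρ t x * u t x ^ 2 + ρ t x * (2 * u t x * pdx u t x) :=
    (((hasDerivAt_pdx hρ).mul ((hasDerivAt_pdx hu).pow 2)).congr_deriv (by norm_num)).deriv
  unfold materialDeriv at *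
  linear_combination u t x * hρ' - hmom + hmomentum + hflux

theorem hasDerivAt_totalEnergy {kp km r U' C' Θ' : ℝ} {U C Θ : ℝ → ℝ}
    (hU : HasDerivAt U U' r) (hC : HasDerivAt C C' r) (hΘ : HasDerivAt Θ Θ' r) :
    HasDerivAt (fun r => U r ^ 2 / 2 + affc kp km (C r) * Θ r)
      (U r * U' + ((kp - km) * C' * Θ r + affc kp km (C r) * Θ')) r :=
  (((hU.pow 2).div_const 2).add (hC.affc.mul hΘ)).congr_deriv (by norm_num; ring)

theorem internal_energy_of_total_energy {kp km : ℝ} {σ : ℝ → ℝ → ℝ}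
    (hc : DifferentiableAt ℝ (uncurry c) (t, x)) (hρ : DifferentiableAt ℝ (uncurry ρ) (t, x))
    (hθ : DifferentiableAt ℝ (uncurry θ) (t, x)) (hu : DifferentiableAt ℝ (uncurry u) (t, x))
    (hσ : DifferentiableAt ℝ (uncurry σ) (t, x))
    (htrans : materialDeriv u c t x = 0)
    (hmass : pdt ρ t x + pdx (fun s y => ρ s y * u s y) t x = 0)
    (hmom : pdx σ t x = ρ t x * materialDeriv u u t x)
    (hener : pdt (fun s y => ρ s y * Etot kp km c θ u s y) t x
      + pdx (fun s y => ρ s y * Etot kp km c θ u s y * u s y) t x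
      = pdx (fun s y => σ s y * u s y) t x) :
    ρ t x * affc kp km (c t x) * materialDeriv u θ t x = σ t x * pdx u t x := by
  have hρ' := materialDeriv_eq_neg_of_mass hρ hu hmass
  have hEt := hasDerivAt_totalEnergy (kp := kp) (km := km)
    (hasDerivAt_pdt hu) (hasDerivAt_pdt hc) (hasDerivAt_pdt hθ)
  have hEx := hasDerivAt_totalEnergy (kp := kp) (km := km)
    (hasDerivAt_pdx hu) (hasDerivAt_pdx hc) (hasDerivAt_pdx hθ)
  have hdens : pdt (fun s y => ρ s y * Etot kp km c θ u s y) t x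
      = pdt ρ t x * Etot kp km c θ u t x
        + ρ t x * (u t x * pdt u t x
          + ((kp - km) * pdt c t x * θ t x + affc kp km (c t x) * pdt θ t x)) :=
    ((hasDerivAt_pdt hρ).mul hEt).deriv
  have hflux : pdx (fun s y => ρ s y * Etot kp km c θ u s y * u s y) t x
      = (pdx ρ t x * Etot kp km c θ u t x
          + ρ t x * (u t x * pdx u t x
            + ((kp - km) * pdx c t x * θ t x + affc kp km (c t x) * pdx θ t x))) * u t x
        + ρ t x * Etot kp km c θ u t x * pdx u t x :=
    (((hasDerivAt_pdx hρ).mul hEx).mul (hasDerivAt_pdx hu)).deriv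
  have hwork : pdx (fun s y => σ s y * u s y) t x = pdx σ t x * u t x + σ t x * pdx u t x :=
    ((hasDerivAt_pdx hσ).mul (hasDerivAt_pdx hu)).deriv
  rw [hdens, hflux, hwork] at hener
  unfold materialDeriv at *
  linear_combination hener - Etot kp km c θ u t x * hρ' - ρ t x * θ t x * (kp - km) * htrans
    + u t x * hmom

end Balance

theorem hasDerivAt_stress {μp μm γp γm r C' V' R' Θ' : ℝ} {C V R Θ : ℝ → ℝ}
    (hC : HasDerivAt C C' r) (hV : HasDerivAt V V' r) (hR : HasDerivAt R R' r)
    (hΘ : HasDerivAt Θ Θ' r) :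
    HasDerivAt (fun r => affc μp μm (C r) * V r - (affc γp γm (C r) - 1) * R r * Θ r)
      ((μp - μm) * C' * V r + affc μp μm (C r) * V'
        - ((γp - γm) * C' * R r * Θ r + (affc γp γm (C r) - 1) * (R' * Θ r + R r * Θ'))) r :=
  ((hC.affc.mul hV).sub (((hC.affc.sub_const 1).mul hR).mul hΘ)).congr_deriv
    (by simp only [Pi.mul_apply]; ring)

section Stress

variable {μp μm γp γm : ℝ} {c ρ θ u : ℝ → ℝ → ℝ} {t x : ℝ}

theorem materialDeriv_sigm (hc : DifferentiableAt ℝ (uncurry c) (t, x))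
    (hρ : DifferentiableAt ℝ (uncurry ρ) (t, x)) (hθ : DifferentiableAt ℝ (uncurry θ) (t, x))
    (hv : DifferentiableAt ℝ (uncurry (pdx u)) (t, x)) :
    materialDeriv u (sigm μp μm γp γm c ρ θ u) t x
      = (μp - μm) * materialDeriv u c t x * pdx u t x
        + affc μp μm (c t x) * materialDeriv u (pdx u) t x
        - ((γp - γm) * materialDeriv u c t x * ρ t x * θ t x
          + (affc γp γm (c t x) - 1)
            * (materialDeriv u ρ t x * θ t x + ρ t x * materialDeriv u θ t x)) := by
  have ht : pdt (sigm μp μm γp γm c ρ θ u) t x = _ :=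
    (hasDerivAt_stress (hasDerivAt_pdt hc) (hasDerivAt_pdt hv) (hasDerivAt_pdt hρ)
      (hasDerivAt_pdt hθ)).deriv
  have hx : pdx (sigm μp μm γp γm c ρ θ u) t x = _ :=
    (hasDerivAt_stress (hasDerivAt_pdx hc) (hasDerivAt_pdx hv) (hasDerivAt_pdx hρ)
      (hasDerivAt_pdx hθ)).deriv
  unfold materialDeriv
  rw [ht, hx]
  ring

theorem contDiffAt_pdx_of_sigm {n : WithTop ℕ∞} (hc : ContDiff ℝ n (uncurry c))
    (hρ : ContDiff ℝ n (uncurry ρ)) (hθ : ContDiff ℝ n (uncurry θ))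
    (hσ : ContDiff ℝ n (uncurry (sigm μp μm γp γm c ρ θ u)))
    (hμ : affc μp μm (c t x) ≠ 0) :
    ContDiffAt ℝ n (uncurry (pdx u)) (t, x) := by
  have hM : ContDiff ℝ n (fun q => affc μp μm (uncurry c q)) := hc.affc
  have hP : ContDiff ℝ n (fun q => (affc γp γm (uncurry c q) - 1) * uncurry ρ q * uncurry θ q) :=
    ((hc.affc.sub contDiff_const).mul hρ).mul hθ
  replace hμ : affc μp μm (uncurry c (t, x)) ≠ 0 := hμ
  refine ((hσ.add hP).contDiffAt.div hM.contDiffAt hμ).congr_of_eventuallyEq ?_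
  filter_upwards [hM.continuous.continuousAt.eventually_ne hμ] with q hq
  simp only [uncurry, sigm, Pi.div_apply] at hq ⊢
  field_simp
  ring

theorem materialDeriv_sigm_eq {kp km : ℝ} (hc : DifferentiableAt ℝ (uncurry c) (t, x))
    (hρ : DifferentiableAt ℝ (uncurry ρ) (t, x)) (hθ : DifferentiableAt ℝ (uncurry θ) (t, x))
    (hv : DifferentiableAt ℝ (uncurry (pdx u)) (t, x)) (hK : affc kp km (c t x) ≠ 0)
    (htransport : materialDeriv u c t x = 0)
    (hmass : materialDeriv u ρ t x = -(ρ t x * pdx u t x))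
    (henergy : ρ t x * affc kp km (c t x) * materialDeriv u θ t x
      = sigm μp μm γp γm c ρ θ u t x * pdx u t x) :
    materialDeriv u (sigm μp μm γp γm c ρ θ u) t x
      = affc μp μm (c t x) * (materialDeriv u (pdx u) t x + pdx u t x ^ 2)
        - ((affc γp γm (c t x) - 1) / affc kp km (c t x) + 1)
          * sigm μp μm γp γm c ρ θ u t x * pdx u t x := by
  have hθ_eq : ρ t x * materialDeriv u θ t x
      = sigm μp μm γp γm c ρ θ u t x * pdx u t x / affc kp km (c t x) := by
    rw [eq_div_iff hK]
    linear_combination henergy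
  have hσ_eq : sigm μp μm γp γm c ρ θ u t x
      = affc μp μm (c t x) * pdx u t x - (affc γp γm (c t x) - 1) * ρ t x * θ t x := rfl
  rw [materialDeriv_sigm hc hρ hθ hv]
  linear_combination ((μp - μm) * pdx u t x - (γp - γm) * ρ t x * θ t x) * htransport
    - (affc γp γm (c t x) - 1) * θ t x * hmass - (affc γp γm (c t x) - 1) * hθ_eq
    + pdx u t x * hσ_eq

theorem pdx_materialDeriv_self (hu : Differentiable ℝ (uncurry u))
    (hv : ContDiffAt ℝ 1 (uncurry (pdx u)) (t, x)) :
    pdx (materialDeriv u u) t x = materialDeriv u (pdx u) t x + pdx u t x ^ 2 := by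
  have h := (hasDerivAt_pdt_of_contDiffAt_pdx hu hv).add
    ((hasDerivAt_pdx (hu (t, x))).mul (hasDerivAt_pdx (hv.differentiableAt one_ne_zero)))
  calc pdx (materialDeriv u u) t x
      = pdt (pdx u) t x + (pdx u t x * pdx u t x + u t x * pdx (pdx u) t x) := h.deriv
    _ = materialDeriv u (pdx u) t x + pdx u t x ^ 2 := by unfold materialDeriv; ring

end Stress

theorem stmt8_general (μp μm γp γm kp km T : ℝ)
    (hconst : GoodConsts μp μm γp γm kp km)
    (c ρ θ u : ℝ → ℝ → ℝ)
    (hc : ContDiff ℝ 1 (uncurry c)) (hρ : ContDiff ℝ 1 (uncurry ρ))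
    (hθ : ContDiff ℝ 1 (uncurry θ)) (hu : ContDiff ℝ 1 (uncurry u))
    (hσ : ContDiff ℝ 1 (uncurry (sigm μp μm γp γm c ρ θ u)))
    (hrange : ∀ t ∈ Icc (0:ℝ) T, ∀ x : ℝ,
      0 < ρ t x ∧ 0 < θ t x ∧ c t x ∈ Icc (0:ℝ) 1)
    (hsol : MesoEqns μp μm γp γm kp km T c ρ θ u) :
    ∀ t ∈ Icc (0:ℝ) T, ∀ x : ℝ,
      pdt (sigm μp μm γp γm c ρ θ u) t x
        + u t x * pdx (sigm μp μm γp γm c ρ θ u) t x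
      = affc μp μm (c t x)
          * pdx (fun s y => pdx (sigm μp μm γp γm c ρ θ u) s y / ρ s y) t x
        - ((affc γp γm (c t x) - 1) / affc kp km (c t x) + 1)
            * sigm μp μm γp γm c ρ θ u t x * pdx u t x := by
  obtain ⟨hμp, hμm, -, -, hkp, hkm⟩ := hconst
  obtain ⟨-, -, -, -, htrans, hmass, hmom, hener⟩ := hsol
  intro t ht x
  obtain ⟨-, -, hc01⟩ := hrange t ht x
  have hc' := hc.differentiable one_ne_zero
  have hρ' := hρ.differentiable one_ne_zero
  have hθ' := hθ.differentiable one_ne_zero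
  have hu' := hu.differentiable one_ne_zero
  have hv : ContDiffAt ℝ 1 (uncurry (pdx u)) (t, x) :=
    contDiffAt_pdx_of_sigm hc hρ hθ hσ (affc_pos hμp hμm hc01).ne'
  have hmomentum : ∀ y, pdx (sigm μp μm γp γm c ρ θ u) t y = ρ t y * materialDeriv u u t y :=
    fun y => pdx_eq_mul_materialDeriv_of_momentum (hρ' _) (hu' _) (hmass t ht y) (hmom t ht y)
  have hquot : pdx (fun s y => pdx (sigm μp μm γp γm c ρ θ u) s y / ρ s y) t x
      = pdx (materialDeriv u u) t x :=
    congrArg (deriv · x) (funext fun y => by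
      show pdx (sigm μp μm γp γm c ρ θ u) t y / ρ t y = _
      rw [hmomentum y, mul_div_cancel_left₀ _ (hrange t ht y).1.ne'])
  rw [hquot, pdx_materialDeriv_self hu' hv]
  exact materialDeriv_sigm_eq (hc' _) (hρ' _) (hθ' _) (hv.differentiableAt one_ne_zero)
    (affc_pos hkp hkm hc01).ne' (htrans t ht x)
    (materialDeriv_eq_neg_of_mass (hρ' _) (hu' _) (hmass t ht x))
    (internal_energy_of_total_energy (hc' _) (hρ' _) (hθ' _) (hu' _)
      (hσ.differentiable one_ne_zero _) (htrans t ht x) (hmass t ht x) (hmomentum x)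
      (hener t ht x))

/-- For a classical solution of the mesoscopic two-phase system with
`u` twice continuously differentiable in space and `σ = μ(c)∂ₓu − (γ(c)−1)ρθ`
continuously differentiable, the stress satisfies pointwise
`D_tσ = μ(c)∂ₓ(∂ₓσ/ρ) − ((γ(c)−1)/c_v(c) + 1)σ∂ₓu`. -/
theorem stmt8 (μp μm γp γm kp km T : ℝ) (hT : 0 < T)
    (hconst : GoodConsts μp μm γp γm kp km)
    (c ρ θ u : ℝ → ℝ → ℝ)
    (hc : ContDiff ℝ 1 (uncurry c)) (hρ : ContDiff ℝ 1 (uncurry ρ))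
    (hθ : ContDiff ℝ 1 (uncurry θ)) (hu : ContDiff ℝ 1 (uncurry u))
    (hu2 : ∀ t : ℝ, ContDiff ℝ 2 (u t))
    (hσ : ContDiff ℝ 1 (uncurry (sigm μp μm γp γm c ρ θ u)))
    (hrange : ∀ t ∈ Icc (0:ℝ) T, ∀ x : ℝ,
      0 < ρ t x ∧ 0 < θ t x ∧ c t x ∈ Icc (0:ℝ) 1)
    (hsol : MesoEqns μp μm γp γm kp km T c ρ θ u) :
    ∀ t ∈ Icc (0:ℝ) T, ∀ x : ℝ,
      pdt (sigm μp μm γp γm c ρ θ u) t x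
        + u t x * pdx (sigm μp μm γp γm c ρ θ u) t x
      = affc μp μm (c t x)
          * pdx (fun s y => pdx (sigm μp μm γp γm c ρ θ u) s y / ρ s y) t x
        - ((affc γp γm (c t x) - 1) / affc kp km (c t x) + 1)
            * sigm μp μm γp γm c ρ θ u t x * pdx u t x :=
  stmt8_general μp μm γp γm kp km T hconst c ρ θ u hc hρ hθ hu hσ hrange hsol
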